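/- arXiv:1004.2946 — 4 statements merged into one kernel-verified Lean document; each statement's English description precedes it below -/
import Mathlib

section
/- Let 1 → A → B → C → 1 be a short exact sequence of groups. For a group D, let rk D denote the supremum of the ranks of finitely generated abelian subgroups of D. Then rk B ≤ rk A + rk C. -/
/-- `rk D` is the supremum of the ranks of finitely generated abelian subgroups of
`D`, equivalently the supremum of all `n` such that the free abelian group of rank
`n` embeds into `D`, as an extended natural number. -/
noncomputable def rk (D : Type*) [Group D] : ℕ∞ :=
  ⨆ (n : ℕ) (_ : ∃ φ : Multiplicative (Fin n → ℤ) →* D, Function.Injective φ),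
    (n : ℕ∞)

/-
It suffices to bound `n` for a single embedding `φ : ℤⁿ ↪ B`. Let `K ≤ ℤⁿ` be the kernel of
`π ∘ φ`. Then `ℤⁿ ⧸ K` embeds into `C`, and `φ` maps `K` into `ker π = ι(A)`, so `K` embeds
into `A`. An abelian group of rank `r` contains `ℤʳ`, so `rank K ≤ rk A` and
`rank (ℤⁿ ⧸ K) ≤ rk C`, and by additivity of rank `n = rank K + rank (ℤⁿ ⧸ K)`.
-/

theorem natCast_le_rk {D : Type*} [Group D] {n : ℕ} (φ : Multiplicative (Fin n → ℤ) →* D)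
    (hφ : Function.Injective φ) : (n : ℕ∞) ≤ rk D :=
  le_iSup₂ (f := fun (n : ℕ) (_ : ∃ φ : Multiplicative (Fin n → ℤ) →* D,
    Function.Injective φ) => (n : ℕ∞)) n ⟨φ, hφ⟩

theorem toENat_rank_le_rk {M D : Type*} [AddCommGroup M] [Group D]
    (f : Multiplicative M →* D) (hf : Function.Injective f) :
    (Module.rank ℤ M).toENat ≤ rk D := by
  refine ENat.forall_natCast_le_iff_le.mp fun n hn => ?_
  obtain ⟨g, hg⟩ := Module.le_rank_iff_exists_linearMap.mp (Cardinal.natCast_le_toENat.mp hn)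
  exact natCast_le_rk (f.comp g.toAddMonoidHom.toMultiplicative) (hf.comp hg)

theorem rk_le_of_short_exact_general (A B C : Type*) [Group A] [Group B] [Group C]
    (ι : A →* B) (π : B →* C)
    (hι : Function.Injective ι)
    (hexact : ι.range = π.ker) :
    rk B ≤ rk A + rk C := by
  refine iSup₂_le fun n ⟨φ, hφ⟩ => ?_
  set ψ : (Fin n → ℤ) →+ Additive C := (π.comp φ).toAdditiveRight
  set K : Submodule ℤ (Fin n → ℤ) := ψ.ker.toIntSubmodule
  have hK : (Module.rank ℤ K).toENat ≤ rk A := by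
    have hmem (x : Multiplicative K) : φ (.ofAdd x.toAdd.1) ∈ ι.range := hexact ▸ x.toAdd.2
    let g : Multiplicative K →* ι.range :=
      (φ.comp K.subtype.toAddMonoidHom.toMultiplicative).codRestrict _ hmem
    have hg : Function.Injective g := fun x y hxy => Subtype.ext (hφ (congrArg Subtype.val hxy))
    exact toENat_rank_le_rk ((MonoidHom.ofInjective hι).symm.toMonoidHom.comp g)
      ((MonoidHom.ofInjective hι).symm.injective.comp hg)
  have hQ : (Module.rank ℤ ((Fin n → ℤ) ⧸ K)).toENat ≤ rk C :=
    toENat_rank_le_rk (QuotientAddGroup.kerLift ψ).toMultiplicativeLeft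
      (QuotientAddGroup.kerLift_injective ψ)
  calc (n : ℕ∞) = (Module.rank ℤ (Fin n → ℤ)).toENat := by simp
    _ = (Module.rank ℤ K).toENat + (Module.rank ℤ ((Fin n → ℤ) ⧸ K)).toENat := by
      rw [← K.rank_quotient_add_rank, map_add, add_comm]
    _ ≤ rk A + rk C := add_le_add hK hQ

/-- For a short exact sequence `1 → A → B → C → 1`, one has `rk B ≤ rk A + rk C`. -/
theorem rk_le_of_short_exact (A B C : Type*) [Group A] [Group B] [Group C]
    (ι : A →* B) (π : B →* C)
    (hι : Function.Injective ι) (hπ : Function.Surjective π)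
    (hexact : ι.range = π.ker) :
    rk B ≤ rk A + rk C :=
  rk_le_of_short_exact_general A B C ι π hι hexact
end

section
/- Let A and B be groups with rk A = rk B = n < ∞, and suppose every abelian subgroup of B is finitely generated. Let η : A → B be an injective group homomorphism, and let a ∈ A be an element contained in a free abelian subgroup of A of rank n. Then rk Z(Z_B(η(a))) ≤ rk Z(Z_A(a)), where Z_G(g) denotes the centralizer of g in G and Z(H) the center of H. -/
/-!
Let `φ : ℤⁿ ↪ A` with `a ∈ φ(ℤⁿ)` and put `ρ = η ∘ φ`. Since `ℤⁿ` is abelian, `ρ(ℤⁿ)` centralizes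
`η a`, so every `c` in the center of `Z_B(η a)` commutes with `ρ(ℤⁿ)`. As `rk B ≤ n`, `c` together
with `ρ(ℤⁿ)` cannot generate a copy of `ℤⁿ⁺¹`, hence some positive power of `c` lies in
`ρ(ℤⁿ) ⊆ η(A)`. So for a copy `ψ(ℤᵏ)` of `ℤᵏ` in that center, a common power `v ↦ ψ(v)ᵐ` is again an
embedding of `ℤᵏ`, now with values in `η(A)`; pulled back along the injective `η` it lands in the
double centralizer of `a`, which is the center of `Z_A(a)`.
-/

open Function Subgroup

section Rank

variable {G H : Type*} [Group G] [Group H]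

lemma le_rk_of_injective {k : ℕ} (f : Multiplicative (Fin k → ℤ) →* G) (hf : Injective f) :
    (k : ℕ∞) ≤ rk G :=
  le_iSup₂ (f := fun (k : ℕ) (_ : ∃ f : Multiplicative (Fin k → ℤ) →* G, Injective f) =>
    (k : ℕ∞)) k ⟨f, hf⟩

lemma rk_le_of_forall
    (h : ∀ (k : ℕ) (f : Multiplicative (Fin k → ℤ) →* G), Injective f → (k : ℕ∞) ≤ rk H) :
    rk G ≤ rk H :=
  iSup₂_le fun k ⟨f, hf⟩ => h k f hf

lemma rk_le_of_injective (f : G →* H) (hf : Injective f) : rk G ≤ rk H :=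
  rk_le_of_forall fun _ g hg => le_rk_of_injective (f.comp g) (hf.comp hg)

lemma rk_congr (e : G ≃* H) : rk G = rk H :=
  (rk_le_of_injective e.toMonoidHom e.injective).antisymm
    (rk_le_of_injective e.symm.toMonoidHom e.symm.injective)

lemma le_rk_of_injective_of_forall_mem_map {k : ℕ} (η : G →* H) (hη : Injective η)
    (K : Subgroup G) (f : Multiplicative (Fin k → ℤ) →* H) (hf : Injective f)
    (hfK : ∀ v, f v ∈ K.map η) : (k : ℕ∞) ≤ rk K :=
  le_rk_of_injective (((K.equivMapOfInjective η hη).symm.toMonoidHom).comp (f.codRestrict _ hfK))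
    ((K.equivMapOfInjective η hη).symm.injective.comp fun _ _ h => hf congr(($h).1))

def mulEquivProdFinSucc (n : ℕ) :
    Multiplicative (Fin (n + 1) → ℤ) ≃* Multiplicative ℤ × Multiplicative (Fin n → ℤ) :=
  (Fin.consLinearEquiv ℤ fun _ => ℤ).toAddEquiv.toMultiplicative.symm.trans
    (MulEquiv.prodMultiplicative _ _)

lemma succ_le_rk_of_injective {n : ℕ}
    (f : Multiplicative ℤ × Multiplicative (Fin n → ℤ) →* G) (hf : Injective f) :
    ((n + 1 : ℕ) : ℕ∞) ≤ rk G :=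
  le_rk_of_injective (f.comp (mulEquivProdFinSucc n).toMonoidHom)
    (hf.comp (mulEquivProdFinSucc n).injective)

end Rank

lemma exists_pow_mem_range_of_rk_le {G : Type*} [Group G] {n : ℕ} (hG : rk G ≤ n)
    {ρ : Multiplicative (Fin n → ℤ) →* G} (hρ : Injective ρ) {c : G}
    (hc : ∀ w, Commute c (ρ w)) : ∃ m : ℕ, 0 < m ∧ c ^ m ∈ ρ.range := by
  by_contra! hnone
  have hzpow : ∀ t : ℤ, c ^ t ∈ ρ.range → t = 0 := by
    intro t ht
    by_contra h0
    refine hnone t.natAbs (Int.natAbs_pos.mpr h0) ?_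
    rcases Int.natAbs_eq t with h | h
    · rwa [h, zpow_natCast] at ht
    · rw [h, zpow_neg, zpow_natCast] at ht
      simpa using ρ.range.inv_mem ht
  set f := (zpowersHom G c).noncommCoprod ρ fun t w => (hc w).zpow_left t.toAdd
  have hf : Injective f := by
    refine (injective_iff_map_eq_one f).mpr fun ⟨t, w⟩ h => ?_
    have hc1 : c ^ t.toAdd = (ρ w)⁻¹ := eq_inv_of_mul_eq_one_left h
    have ht : t = 1 := hzpow t.toAdd ⟨w⁻¹, by rw [hc1, map_inv]⟩
    have hw : ρ w = 1 := inv_eq_one.mp (by rw [← hc1, ht, toAdd_one, zpow_zero])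
    rw [ht, hρ (hw.trans ρ.map_one.symm)]
    rfl
  exact absurd (Nat.cast_le.mp ((succ_le_rk_of_injective f hf).trans hG)) (by omega)

lemma exists_forall_pow_mem {k : ℕ} {K : Subgroup (Multiplicative (Fin k → ℤ))}
    (h : ∀ i, ∃ m : ℕ, 0 < m ∧ Multiplicative.ofAdd (Pi.single i 1) ^ m ∈ K) :
    ∃ m : ℕ, 0 < m ∧ ∀ v, v ^ m ∈ K := by
  classical
  choose ms hpos hmem using h
  refine ⟨∏ i, ms i, Finset.prod_pos fun i _ => hpos i, fun v => ?_⟩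
  have hsingle : ∀ i, (∏ j, ms j) • Pi.single i (1 : ℤ) ∈ K.toAddSubgroup' := fun i => by
    obtain ⟨t, ht⟩ := Finset.dvd_prod_of_mem ms (Finset.mem_univ i)
    rw [mem_toAddSubgroup', ofAdd_nsmul, ht, pow_mul]
    exact K.pow_mem (hmem i) t
  suffices (∏ i, ms i) • v.toAdd ∈ K.toAddSubgroup' by
    rwa [mem_toAddSubgroup', ofAdd_nsmul, ofAdd_toAdd] at this
  refine AddSubgroup.pi_mem_of_single_mem _ fun i => ?_
  convert zsmul_mem (hsingle i) (v.toAdd i) using 1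
  ext j
  rcases eq_or_ne j i with rfl | hj
  · simp [mul_comm]
  · simp [hj]

section Centralizer

variable {G H : Type*} [Group G] [Group H]

def centerCentralizerEquiv (s : Set G) (hs : s ⊆ centralizer s) :
    center (centralizer s) ≃* centralizer (centralizer s : Set G) where
  toFun z := ⟨z.1.1, fun y hy => congr(($(mem_center_iff.mp z.2 ⟨y, hy⟩)).1)⟩
  invFun x := ⟨⟨x.1, centralizer_le hs x.2⟩, mem_center_iff.mpr fun y => Subtype.ext (x.2 y.1 y.2)⟩
  left_inv _ := rfl
  right_inv _ := rfl
  map_mul' _ _ := rfl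

lemma rk_center_centralizer_singleton (g : G) :
    rk (center (centralizer {g})) = rk (centralizer (centralizer {g} : Set G)) :=
  rk_congr <| centerCentralizerEquiv _ <|
    Set.singleton_subset_iff.mpr (mem_centralizer_singleton_iff.mpr rfl)

lemma comap_centralizer_centralizer_image_le (η : G →* H) (hη : Injective η) (s : Set G) :
    (centralizer (centralizer (η '' s) : Set H)).comap η ≤ centralizer (centralizer s : Set G) :=
  fun x hx y hy => hη <| by
    simpa using hx (η y) (map_centralizer_le_centralizer_image s η ⟨y, hy, rfl⟩)

end Centralizer

theorem rk_centralizer_centralizer_le {A B : Type*} [Group A] [Group B] {n : ℕ}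
    (hB : rk B ≤ n) {η : A →* B} (hη : Injective η) {a : A}
    (ha : ∃ φ : Multiplicative (Fin n → ℤ) →* A, Injective φ ∧ a ∈ φ.range) :
    rk (centralizer (centralizer {η a} : Set B)) ≤ rk (centralizer (centralizer {a} : Set A)) := by
  obtain ⟨φ, hφ, w₀, rfl⟩ := ha
  set ρ := η.comp φ
  have hρ : Injective ρ := hη.comp hφ
  have hρ_mem : ∀ w, ρ w ∈ centralizer {η (φ w₀)} := fun w =>
    mem_centralizer_singleton_iff.mpr (by simp only [ρ, MonoidHom.comp_apply, ← map_mul, mul_comm])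
  set D := centralizer (centralizer {η (φ w₀)} : Set B)
  refine rk_le_of_forall fun k ψ hψ => ?_
  have hpow : ∀ i, ∃ m : ℕ, 0 < m ∧
      Multiplicative.ofAdd (Pi.single i 1) ^ m ∈ ρ.range.comap (D.subtype.comp ψ) := fun i => by
    simpa only [mem_comap, map_pow, MonoidHom.comp_apply, coe_subtype] using
      exists_pow_mem_range_of_rk_le hB hρ fun w => ((ψ _).2 _ (hρ_mem w)).symm
  obtain ⟨m, hm, hmρ⟩ := exists_forall_pow_mem hpow
  refine le_rk_of_injective_of_forall_mem_map η hη _ ((D.subtype.comp ψ).comp (powMonoidHom m))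
    (D.subtype_injective.comp (hψ.comp (pow_left_injective hm.ne'))) fun v => ?_
  obtain ⟨x, hx⟩ := hmρ v
  refine ⟨φ x, comap_centralizer_centralizer_image_le η hη {φ w₀} ?_, hx⟩
  rw [Set.image_singleton, mem_comap]
  exact hx ▸ (ψ (v ^ m)).2

theorem rk_center_centralizer_le_general (A B : Type*) [Group A] [Group B] (n : ℕ)
    (hB : rk B = (n : ℕ∞))
    (η : A →* B) (hη : Function.Injective η) (a : A)
    (ha : ∃ φ : Multiplicative (Fin n → ℤ) →* A,
      Function.Injective φ ∧ a ∈ φ.range) :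
    rk (Subgroup.center (Subgroup.centralizer ({η a} : Set B))) ≤
      rk (Subgroup.center (Subgroup.centralizer ({a} : Set A))) := by
  rw [rk_center_centralizer_singleton, rk_center_centralizer_singleton]
  exact rk_centralizer_centralizer_le hB.le hη ha

/-- Irmak's lemma: if `rk A = rk B = n`, every abelian subgroup of `B` is finitely
generated, `η : A → B` is injective and `a` lies in a free abelian subgroup of `A`
of rank `n`, then `rk Z(Z_B(η a)) ≤ rk Z(Z_A(a))`. -/
theorem rk_center_centralizer_le (A B : Type*) [Group A] [Group B] (n : ℕ)
    (hA : rk A = (n : ℕ∞)) (hB : rk B = (n : ℕ∞))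
    (hBab : ∀ H : Subgroup B, (∀ x ∈ H, ∀ y ∈ H, x * y = y * x) → Group.FG H)
    (η : A →* B) (hη : Function.Injective η) (a : A)
    (ha : ∃ φ : Multiplicative (Fin n → ℤ) →* A,
      Function.Injective φ ∧ a ∈ φ.range) :
    rk (Subgroup.center (Subgroup.centralizer ({η a} : Set B))) ≤
      rk (Subgroup.center (Subgroup.centralizer ({a} : Set A))) :=
  rk_center_centralizer_le_general A B n hB η hη a ha
end

section
/- Let A and B be groups with rk A = rk B = n < ∞ such that every abelian subgroup of B is finitely generated and B is torsion-free. Let η : A → B be an injective homomorphism, and let a ∈ A be a nontrivial element contained in a free abelian subgroup of A of rank n. If the center of the centralizer of a in A is isomorphic to ℤ, then the center of the centralizer of η(a) in B is isomorphic to ℤ. -/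
namespace Subgroup

variable {G H : Type*} [Group G] [Group H]

theorem mem_centralizer_centralizer_singleton_self (a : G) :
    a ∈ centralizer (centralizer {a} : Set G) :=
  fun _ hg => mem_centralizer_singleton_iff.mp hg

instance isMulCommutative_centralizer_centralizer_singleton (a : G) :
    IsMulCommutative (centralizer (centralizer {a} : Set G)) :=
  le_centralizer_iff_isMulCommutative.mp fun _ hx _ hy =>
    Set.centralizer_centralizer_comm_of_comm (by simp) _ hy _ hx

theorem map_subtype_center_centralizer_singleton (a : G) :
    (center (centralizer {a})).map (centralizer {a}).subtype =
      centralizer (centralizer {a} : Set G) := by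
  ext x
  constructor
  · rintro ⟨y, hy, rfl⟩ g hg
    exact congrArg Subtype.val (mem_center_iff.mp hy ⟨g, hg⟩)
  · intro hx
    have hxa : x ∈ centralizer {a} := mem_centralizer_singleton_iff.mpr
      (hx a (mem_centralizer_singleton_iff.mpr rfl)).symm
    exact ⟨⟨x, hxa⟩, mem_center_iff.mpr fun g => Subtype.ext (hx g g.2), rfl⟩

noncomputable def centerCentralizerEquiv (a : G) :
    center (centralizer {a}) ≃* centralizer (centralizer {a} : Set G) :=
  (equivMapOfInjective _ _ (centralizer {a}).subtype_injective).trans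
    (MulEquiv.subgroupCongr (map_subtype_center_centralizer_singleton a))

theorem mem_centralizer_centralizer_of_map_mem {f : G →* H} (hf : Function.Injective f) {a y : G}
    (hy : f y ∈ centralizer (centralizer {f a} : Set H)) :
    y ∈ centralizer (centralizer {a} : Set G) := by
  intro g hg
  have hfg : f g ∈ centralizer {f a} := by
    simpa using map_centralizer_le_centralizer_image {a} f (mem_map_of_mem f hg)
  exact hf (by simpa only [map_mul] using hy (f g) hfg)

end Subgroup

theorem le_rk {D : Type*} [Group D] {m : ℕ} {φ : Multiplicative (Fin m → ℤ) →* D}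
    (hφ : Function.Injective φ) : (m : ℕ∞) ≤ rk D :=
  le_iSup₂_of_le m ⟨φ, hφ⟩ le_rfl

theorem exists_zpow_mem_range_of_forall_commute {G : Type*} [Group G] {n : ℕ} (hG : rk G ≤ n)
    {φ : Multiplicative (Fin n → ℤ) →* G} (hφ : Function.Injective φ) {b : G}
    (hb : ∀ v, Commute b (φ v)) : ∃ k : ℤ, k ≠ 0 ∧ b ^ k ∈ φ.range := by
  by_contra! hcon
  let ψ := (zpowersHom G b).noncommCoprod φ fun k v => (hb v).zpow_left _
  have hψ : Function.Injective ψ := by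
    rw [injective_iff_map_eq_one]
    rintro ⟨k, v⟩ hkv
    change b ^ k.toAdd * φ v = 1 at hkv
    have hk : k = 1 := by
      by_contra hk
      refine hcon k.toAdd (by simpa using hk) ⟨v⁻¹, ?_⟩
      rw [map_inv]
      exact (eq_inv_of_mul_eq_one_left hkv).symm
    subst hk
    exact Prod.ext rfl (hφ (by simpa using hkv))
  let e : Multiplicative (Fin (n + 1) → ℤ) ≃*
      Multiplicative ℤ × Multiplicative (Fin n → ℤ) :=
    (Fin.consLinearEquiv ℤ fun _ => ℤ).toAddEquiv.toMultiplicative.symm.trans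
      (MulEquiv.prodMultiplicative _ _)
  have := (le_rk (φ := ψ.comp e.toMonoidHom) (hψ.comp e.injective)).trans hG
  norm_cast at this
  omega

open Subgroup in
theorem exists_zpow_eq_map_of_mem_centralizer_centralizer {A B : Type*} [Group A] [Group B]
    {n : ℕ} (hB : rk B ≤ n) {η : A →* B} (hη : Function.Injective η)
    {φ : Multiplicative (Fin n → ℤ) →* A} (hφ : Function.Injective φ) {a : A}
    (ha : a ∈ φ.range) {x : B} (hx : x ∈ centralizer (centralizer {η a} : Set B)) :
    ∃ k : ℤ, k ≠ 0 ∧ ∃ z ∈ centralizer (centralizer {a} : Set A), x ^ k = η z := by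
  obtain ⟨w, rfl⟩ := ha
  have hφC : ∀ v, φ v ∈ centralizer {φ w} := fun v =>
    mem_centralizer_singleton_iff.mpr (by rw [← map_mul, ← map_mul, mul_comm])
  have hcomm : ∀ v, Commute x ((η.comp φ) v) := by
    intro v
    have hηφC : η (φ v) ∈ centralizer {η (φ w)} := by
      simpa using map_centralizer_le_centralizer_image {φ w} η (mem_map_of_mem η (hφC v))
    exact (hx _ hηφC).symm
  obtain ⟨k, hk, u, hu⟩ := exists_zpow_mem_range_of_forall_commute hB (hη.comp hφ) hcomm
  refine ⟨k, hk, φ u, mem_centralizer_centralizer_of_map_mem hη ?_, hu.symm⟩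
  exact hu ▸ Subgroup.zpow_mem _ hx k

theorem exists_zpow_eq_zpow_of_mulEquiv_int {H : Type*} [Group H] (e : H ≃* Multiplicative ℤ)
    {h : H} (hh : h ≠ 1) (z : H) : ∃ k : ℤ, k ≠ 0 ∧ ∃ m : ℤ, z ^ k = h ^ m := by
  refine ⟨(e h).toAdd, by simpa using hh, (e z).toAdd, e.injective ?_⟩
  simp only [map_zpow]
  apply Multiplicative.toAdd.injective
  simp [mul_comm]

theorem nonempty_mulEquiv_int_of_forall_exists_zpow_eq {G : Type*} [CommGroup G] [Group.FG G]
    [IsMulTorsionFree G] {g : G} (hg : g ≠ 1)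
    (h : ∀ x : G, ∃ k : ℤ, k ≠ 0 ∧ ∃ m : ℤ, x ^ k = g ^ m) :
    Nonempty (G ≃* Multiplicative ℤ) := by
  let g' : Additive G := Additive.ofMul g
  have : Module.Finite ℤ (Additive G) :=
    Module.Finite.iff_addGroup_fg.mpr (GroupFG.iff_add_fg.mp ‹_›)
  have hquot : Module.rank ℤ (Additive G ⧸ ℤ ∙ g') = 0 := by
    refine rank_eq_zero_iff.mpr <| (Submodule.Quotient.mk_surjective _).forall.mpr fun x => ?_
    obtain ⟨k, hk, m, hkm⟩ := h x.toMul
    refine ⟨k, hk, ?_⟩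
    rw [← Submodule.Quotient.mk_smul, Submodule.Quotient.mk_eq_zero,
      Submodule.mem_span_singleton]
    exact ⟨m, congrArg Additive.ofMul hkm.symm⟩
  have hspan : Module.rank ℤ (ℤ ∙ g') = 1 := by
    simpa using (LinearEquiv.toSpanNonzeroSingleton ℤ _ g' hg).lift_rank_eq.symm
  have hrank : Module.rank ℤ (Additive G) = 1 := by
    rw [← HasRankNullity.rank_quotient_add_rank (ℤ ∙ g'), hquot, zero_add, hspan]
  obtain ⟨e⟩ := nonempty_linearEquiv_of_lift_rank_eq (R := ℤ) (M := Additive G) (M' := ℤ)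
    (by simp [hrank])
  exact ⟨AddEquiv.toMultiplicativeRight e.toAddEquiv⟩

theorem center_centralizer_infinite_cyclic_general (A B : Type*) [Group A] [Group B] (n : ℕ)
    (hB : rk B = (n : ℕ∞))
    (hBab : ∀ H : Subgroup B, (∀ x ∈ H, ∀ y ∈ H, x * y = y * x) → Group.FG H)
    (htf : ∀ b : B, b ≠ 1 → ¬IsOfFinOrder b)
    (η : A →* B) (hη : Function.Injective η) (a : A) (ha1 : a ≠ 1)
    (ha : ∃ φ : Multiplicative (Fin n → ℤ) →* A,
      Function.Injective φ ∧ a ∈ φ.range)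
    (hZ : Nonempty
      (↥(Subgroup.center (Subgroup.centralizer ({a} : Set A))) ≃* Multiplicative ℤ)) :
    Nonempty
      (↥(Subgroup.center (Subgroup.centralizer ({η a} : Set B))) ≃* Multiplicative ℤ) := by
  obtain ⟨φ, hφ, hφa⟩ := ha
  obtain ⟨ζ⟩ := hZ
  set Z := Subgroup.centralizer (Subgroup.centralizer {η a} : Set B)
  let : CommGroup Z := { mul_comm := mul_comm' }
  have : IsMulTorsionFree Z := IsMulTorsionFree.of_not_isOfFinOrder fun x hx hfin =>
    htf x (by simpa using hx) (Z.subtype.isOfFinOrder hfin)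
  have : Group.FG Z :=
    hBab Z fun x hx y hy => congrArg Subtype.val (mul_comm (⟨x, hx⟩ : Z) ⟨y, hy⟩)
  have haZ : η a ∈ Z := Subgroup.mem_centralizer_centralizer_singleton_self _
  have key : ∀ x : Z, ∃ k : ℤ, k ≠ 0 ∧ ∃ m : ℤ, x ^ k = ⟨η a, haZ⟩ ^ m := by
    rintro ⟨x, hx⟩
    obtain ⟨p, hp, z, hz, hxz⟩ :=
      exists_zpow_eq_map_of_mem_centralizer_centralizer hB.le hη hφ hφa hx
    obtain ⟨k, hk, m, hzk⟩ := exists_zpow_eq_zpow_of_mulEquiv_int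
      ((Subgroup.centerCentralizerEquiv a).symm.trans ζ)
      (h := ⟨a, Subgroup.mem_centralizer_centralizer_singleton_self a⟩)
      (fun h => ha1 congr($h.1)) ⟨z, hz⟩
    refine ⟨p * k, mul_ne_zero hp hk, m, Subtype.ext ?_⟩
    simpa [zpow_mul, hxz, ← map_zpow] using congr(η $hzk.1)
  obtain ⟨e⟩ := nonempty_mulEquiv_int_of_forall_exists_zpow_eq
    (fun h => ha1 (hη (by simpa using congr($h.1)))) key
  exact ⟨(Subgroup.centerCentralizerEquiv (η a)).trans e⟩

/-- If `rk A = rk B = n`, every abelian subgroup of `B` is finitely generated, `B`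
is torsion-free, `η : A → B` is injective, `a ≠ 1` lies in a free abelian subgroup
of `A` of rank `n`, and the center of the centralizer of `a` in `A` is infinite
cyclic, then so is the center of the centralizer of `η a` in `B`. -/
theorem center_centralizer_infinite_cyclic (A B : Type*) [Group A] [Group B] (n : ℕ)
    (hA : rk A = (n : ℕ∞)) (hB : rk B = (n : ℕ∞))
    (hBab : ∀ H : Subgroup B, (∀ x ∈ H, ∀ y ∈ H, x * y = y * x) → Group.FG H)
    (htf : ∀ b : B, b ≠ 1 → ¬IsOfFinOrder b)
    (η : A →* B) (hη : Function.Injective η) (a : A) (ha1 : a ≠ 1)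
    (ha : ∃ φ : Multiplicative (Fin n → ℤ) →* A,
      Function.Injective φ ∧ a ∈ φ.range)
    (hZ : Nonempty
      (↥(Subgroup.center (Subgroup.centralizer ({a} : Set A))) ≃* Multiplicative ℤ)) :
    Nonempty
      (↥(Subgroup.center (Subgroup.centralizer ({η a} : Set B))) ≃* Multiplicative ℤ) :=
  center_centralizer_infinite_cyclic_general A B n hB hBab htf η hη a ha1 ha hZ
end

section
/- Let V be a set equipped with a symmetric function i : V × V → ℕ with i(x,x) = 0 for all x, extended to finite subsets by i(σ,τ) = Σ_{x∈σ, y∈τ} i(x,y). Let v₁, v₂, v₃, v₄ be two-element subsets of V such that i(v_k, v_{k+1}) = 0 and i(v_k, v_{k+2}) ≠ 0 for each k modulo 4, and suppose that each of the four pairs {v₁,v₂}, {v₂,v₃}, {v₃,v₄}, {v₄,v₁} of consecutive sets has nonempty intersection. Then there exists an element of V contained in all four sets v₁, v₂, v₃, v₄. -/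
open Finset

/-- The additive extension of an intersection-number-like function to finite subsets. -/
def interSum {V : Type*} (i : V → V → ℕ) (σ τ : Finset V) : ℕ :=
  ∑ x ∈ σ, ∑ y ∈ τ, i x y

lemma interSum_eq_zero_iff {V : Type*} (i : V → V → ℕ) (σ τ : Finset V) :
    interSum i σ τ = 0 ↔ ∀ x ∈ σ, ∀ y ∈ τ, i x y = 0 := by
  simp [interSum, Finset.sum_eq_zero_iff]

/-- In a "square" of two-element sets (consecutive ones disjoint, opposite ones
intersecting) in which consecutive sets share an element, all four sets share a
common element. -/
theorem square_has_root (V : Type*) [DecidableEq V] (i : V → V → ℕ)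
    (hsymm : ∀ x y : V, i x y = i y x) (hself : ∀ x : V, i x x = 0)
    (v₁ v₂ v₃ v₄ : Finset V)
    (hc₁ : v₁.card = 2) (hc₂ : v₂.card = 2) (hc₃ : v₃.card = 2) (hc₄ : v₄.card = 2)
    (h12 : interSum i v₁ v₂ = 0) (h23 : interSum i v₂ v₃ = 0)
    (h34 : interSum i v₃ v₄ = 0) (h41 : interSum i v₄ v₁ = 0)
    (h13 : interSum i v₁ v₃ ≠ 0) (h24 : interSum i v₂ v₄ ≠ 0)
    (n12 : (v₁ ∩ v₂).Nonempty) (n23 : (v₂ ∩ v₃).Nonempty)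
    (n34 : (v₃ ∩ v₄).Nonempty) (n41 : (v₄ ∩ v₁).Nonempty) :
    ∃ x : V, x ∈ v₁ ∧ x ∈ v₂ ∧ x ∈ v₃ ∧ x ∈ v₄ := by
  obtain ⟨a, ha⟩ := n12
  obtain ⟨b, hb⟩ := n23
  obtain ⟨c, hc⟩ := n34
  obtain ⟨d, hd⟩ := n41
  simp only [mem_inter] at ha hb hc hd
  rw [interSum_eq_zero_iff] at h12 h23 h34 h41
  have claim1 : a = b ∨ c = d := by
    by_contra h
    push_neg at h
    obtain ⟨hab, hcd⟩ := h
    have hv2 : {a, b} = v₂ := by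
      apply eq_of_subset_of_card_le
      · intro x hx
        simp only [mem_insert, mem_singleton] at hx
        rcases hx with rfl | rfl
        · exact ha.2
        · exact hb.1
      · rw [hc₂, card_insert_of_notMem (by simpa using hab), card_singleton]
    have hv4 : {c, d} = v₄ := by
      apply eq_of_subset_of_card_le
      · intro x hx
        simp only [mem_insert, mem_singleton] at hx
        rcases hx with rfl | rfl
        · exact hc.2
        · exact hd.1
      · rw [hc₄, card_insert_of_notMem (by simpa using hcd), card_singleton]
    apply h24
    rw [interSum_eq_zero_iff]
    intro x hx y hy
    rw [← hv2] at hx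
    rw [← hv4] at hy
    simp only [mem_insert, mem_singleton] at hx hy
    rcases hx with rfl | rfl <;> rcases hy with rfl | rfl
    · rw [hsymm]; exact h41 _ hc.2 _ ha.1
    · rw [hsymm]; exact h41 _ hd.1 _ ha.1
    · exact h34 _ hb.2 _ hc.2
    · exact h34 _ hb.2 _ hd.1
  have claim2 : d = a ∨ b = c := by
    by_contra h
    push_neg at h
    obtain ⟨hda, hbc⟩ := h
    have hv1 : {d, a} = v₁ := by
      apply eq_of_subset_of_card_le
      · intro x hx
        simp only [mem_insert, mem_singleton] at hx
        rcases hx with rfl | rfl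
        · exact hd.2
        · exact ha.1
      · rw [hc₁, card_insert_of_notMem (by simpa using hda), card_singleton]
    have hv3 : {b, c} = v₃ := by
      apply eq_of_subset_of_card_le
      · intro x hx
        simp only [mem_insert, mem_singleton] at hx
        rcases hx with rfl | rfl
        · exact hb.2
        · exact hc.1
      · rw [hc₃, card_insert_of_notMem (by simpa using hbc), card_singleton]
    apply h13
    rw [interSum_eq_zero_iff]
    intro x hx y hy
    rw [← hv1] at hx
    rw [← hv3] at hy
    simp only [mem_insert, mem_singleton] at hx hy
    rcases hx with rfl | rfl <;> rcases hy with rfl | rfl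
    · exact h12 _ hd.2 _ hb.1
    · rw [hsymm]; exact h34 _ hc.1 _ hd.1
    · exact h23 _ ha.2 _ hb.2
    · rw [hsymm]; exact h41 _ hc.2 _ ha.1
  rcases claim1 with h1 | h1 <;> rcases claim2 with h2 | h2
  · exact ⟨a, ha.1, ha.2, by rw [h1]; exact hb.2, by rw [← h2]; exact hd.1⟩
  · exact ⟨a, ha.1, ha.2, by rw [h1]; exact hb.2, by rw [h1, h2]; exact hc.2⟩
  · exact ⟨a, ha.1, ha.2, by rw [← h2, ← h1]; exact hc.1, by rw [← h2]; exact hd.1⟩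
  · exact ⟨b, by rw [h2, h1]; exact hd.2, hb.1, hb.2, by rw [h2]; exact hc.2⟩
end
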